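/- Let h_1, ..., h_n : ℝ → ℝ be convex, continuously differentiable functions, each with nonempty compact argmin set, and suppose n > 3f. Define H(x) = F(x) + G(x) where F(x) = min_{F₁⊆A(x),|F₁|≤f} Σ_{i∈A(x)−F₁} h_i'(x) with A(x) = {i : h_i'(x) > 0}, and G(x) = max_{F₂⊆B(x),|F₂|≤f} Σ_{i∈B(x)−F₂} h_i'(x) with B(x) = {i : h_i'(x) < 0}. Then there exists x̃ ∈ ℝ such that H(x̃) = 0. -/

import Mathlib

/-!
Trimming at most `f` of the positive derivatives and minimising is the same as minimising
`∑ i ∉ S, max (d i) 0` over all `S` with `#S ≤ f`, a finite minimum of continuous functions of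
the derivative vector `d`; so `F` is continuous, and likewise `G`, via `d ↦ -d`. Convexity makes
each `h_i'` monotone, vanishing at a minimiser of `h_i`. Below every minimiser all derivatives are
`≤ 0`, so `F = 0` and `H = G ≤ 0` there; above every minimiser `G = 0` and `H = F ≥ 0`. The
intermediate value theorem gives a zero of `H`.
-/

open Finset

section TrimmedSums

variable {ι : Type*} [Fintype ι]

lemma nonempty_filter_card_le (f : ℕ) : (univ.filter fun S : Finset ι => S.card ≤ f).Nonempty :=
  ⟨∅, by simp⟩

variable [DecidableEq ι]

def trimmedPosSums (f : ℕ) (d : ι → ℝ) : Set ℝ :=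
  {s | ∃ F₁ : Finset ι, F₁ ⊆ univ.filter (fun i => 0 < d i) ∧ F₁.card ≤ f ∧
    s = ∑ i ∈ univ.filter (fun i => 0 < d i) \ F₁, d i}

def trimmedNegSums (f : ℕ) (d : ι → ℝ) : Set ℝ :=
  {s | ∃ F₂ : Finset ι, F₂ ⊆ univ.filter (fun i => d i < 0) ∧ F₂.card ≤ f ∧
    s = ∑ i ∈ univ.filter (fun i => d i < 0) \ F₂, d i}

lemma trimmedNegSums_eq_neg (f : ℕ) (d : ι → ℝ) :
    trimmedNegSums f d = -trimmedPosSums f (-d) := by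
  have hfilter : univ.filter (fun i => d i < 0) = univ.filter (fun i => 0 < (-d) i) := by
    simp only [Pi.neg_apply, neg_pos]
  ext s
  simp only [trimmedNegSums, trimmedPosSums, Set.mem_neg, Set.mem_ofPred_eq, hfilter,
    Pi.neg_apply, sum_neg_distrib, neg_inj]

lemma sum_filter_pos_sdiff (d : ι → ℝ) (S : Finset ι) :
    ∑ i ∈ univ.filter (fun i => 0 < d i) \ S, d i = ∑ i ∈ Sᶜ, max (d i) 0 := by
  have hset : univ.filter (fun i => 0 < d i) \ S = Sᶜ.filter (fun i => 0 < d i) := by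
    ext i
    simp only [mem_sdiff, mem_filter, mem_univ, true_and, mem_compl]
    tauto
  rw [hset, sum_filter]
  refine sum_congr rfl fun i _ => ?_
  split_ifs with hd
  · exact (max_eq_left hd.le).symm
  · exact (max_eq_right (not_lt.1 hd)).symm

def trimmedPosSum (f : ℕ) (d : ι → ℝ) : ℝ :=
  (univ.filter fun S : Finset ι => S.card ≤ f).inf' (nonempty_filter_card_le f)
    fun S => ∑ i ∈ Sᶜ, max (d i) 0

lemma isLeast_trimmedPosSum (f : ℕ) (d : ι → ℝ) :
    IsLeast (trimmedPosSums f d) (trimmedPosSum f d) := by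
  constructor
  · obtain ⟨S, hS, hmin⟩ := exists_mem_eq_inf' (nonempty_filter_card_le f)
      fun S : Finset ι => ∑ i ∈ Sᶜ, max (d i) 0
    set A := univ.filter fun i => 0 < d i
    refine ⟨S ∩ A, inter_subset_right, (card_le_card inter_subset_left).trans (mem_filter.1 hS).2,
      ?_⟩
    rw [show A \ (S ∩ A) = A \ S by ext; simp only [mem_sdiff, mem_inter]; tauto,
      sum_filter_pos_sdiff, trimmedPosSum, hmin]
  · rintro s ⟨F₁, -, hcard, rfl⟩
    rw [sum_filter_pos_sdiff]
    exact inf'_le (fun S : Finset ι => ∑ i ∈ Sᶜ, max (d i) 0) (mem_filter.2 ⟨mem_univ _, hcard⟩)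

lemma continuous_trimmedPosSum (f : ℕ) : Continuous (trimmedPosSum f : (ι → ℝ) → ℝ) :=
  Continuous.finset_inf'_apply _ fun _ _ =>
    continuous_finsetSum _ fun i _ => (continuous_apply i).max continuous_const

lemma trimmedPosSum_nonneg (f : ℕ) (d : ι → ℝ) : 0 ≤ trimmedPosSum f d :=
  le_inf' _ _ fun _ _ => sum_nonneg fun _ _ => le_max_right _ _

lemma trimmedPosSum_eq_zero {f : ℕ} {d : ι → ℝ} (hd : d ≤ 0) : trimmedPosSum f d = 0 := by
  have hmax (i : ι) : max (d i) 0 = 0 := max_eq_right (hd i)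
  simp only [trimmedPosSum, hmax, sum_const_zero, inf'_const]

theorem exists_trimmedPosSum_sub_eq_zero (f : ℕ) {D : ℝ → ι → ℝ} (hD : Continuous D)
    {a b : ℝ} (ha : D a ≤ 0) (hb : 0 ≤ D b) :
    ∃ x, trimmedPosSum f (D x) - trimmedPosSum f (-D x) = 0 := by
  have hcont : Continuous fun x => trimmedPosSum f (D x) - trimmedPosSum f (-D x) :=
    ((continuous_trimmedPosSum f).comp hD).sub ((continuous_trimmedPosSum f).comp hD.neg)
  have hzero : (0 : ℝ) ∈ Set.uIcc (trimmedPosSum f (D a) - trimmedPosSum f (-D a))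
      (trimmedPosSum f (D b) - trimmedPosSum f (-D b)) := by
    rw [trimmedPosSum_eq_zero ha, trimmedPosSum_eq_zero (neg_nonpos.2 hb)]
    exact Set.mem_uIcc.2 (Or.inl ⟨by linarith [trimmedPosSum_nonneg f (-D a)],
      by linarith [trimmedPosSum_nonneg f (D b)]⟩)
  obtain ⟨x, -, hx⟩ := intermediate_value_uIcc hcont.continuousOn hzero
  exact ⟨x, hx⟩

end TrimmedSums

lemma IsGreatest.isLeast_neg {α : Type*} [AddCommGroup α] [PartialOrder α]
    [IsOrderedAddMonoid α] {s : Set α} {a : α} (h : IsGreatest (-s) a) : IsLeast s (-a) :=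
  ⟨Set.mem_neg.1 h.1, fun _ hy => neg_le.2 (h.2 (by simpa using hy))⟩

section ConvexDeriv

variable {φ : ℝ → ℝ} {m x : ℝ}

lemma ConvexOn.monotone_deriv (hconv : ConvexOn ℝ Set.univ φ) (hdiff : Differentiable ℝ φ) :
    Monotone (deriv φ) :=
  monotoneOn_univ.1 (hconv.monotoneOn_deriv fun y _ => hdiff y)

lemma deriv_eq_zero_of_forall_le (hm : ∀ y, φ m ≤ φ y) : deriv φ m = 0 :=
  IsMinOn.isLocalMin (f := φ) (s := Set.univ) (fun y _ => hm y) Filter.univ_mem |>.deriv_eq_zero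

lemma ConvexOn.deriv_nonpos_of_le_of_forall_le (hconv : ConvexOn ℝ Set.univ φ)
    (hdiff : Differentiable ℝ φ) (hm : ∀ y, φ m ≤ φ y) (hx : x ≤ m) : deriv φ x ≤ 0 :=
  (hconv.monotone_deriv hdiff hx).trans (deriv_eq_zero_of_forall_le hm).le

lemma ConvexOn.deriv_nonneg_of_ge_of_forall_le (hconv : ConvexOn ℝ Set.univ φ)
    (hdiff : Differentiable ℝ φ) (hm : ∀ y, φ m ≤ φ y) (hx : m ≤ x) : 0 ≤ deriv φ x :=
  (deriv_eq_zero_of_forall_le hm).ge.trans (hconv.monotone_deriv hdiff hx)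

end ConvexDeriv

theorem exists_zero_of_trimmed_gradient_sum_general
    (n f : ℕ) (h : Fin n → ℝ → ℝ)
    (hconv : ∀ i, ConvexOn ℝ Set.univ (h i))
    (hsmooth : ∀ i, ContDiff ℝ 1 (h i))
    (hne : ∀ i, {x : ℝ | ∀ y : ℝ, h i x ≤ h i y}.Nonempty)
    (F G : ℝ → ℝ)
    (hF : ∀ x : ℝ,
      IsLeast {s : ℝ | ∃ F₁ : Finset (Fin n),
        F₁ ⊆ Finset.univ.filter (fun i => 0 < deriv (h i) x) ∧ F₁.card ≤ f ∧
        s = ∑ i ∈ (Finset.univ.filter (fun i => 0 < deriv (h i) x)) \ F₁, deriv (h i) x}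
        (F x))
    (hG : ∀ x : ℝ,
      IsGreatest {s : ℝ | ∃ F₂ : Finset (Fin n),
        F₂ ⊆ Finset.univ.filter (fun i => deriv (h i) x < 0) ∧ F₂.card ≤ f ∧
        s = ∑ i ∈ (Finset.univ.filter (fun i => deriv (h i) x < 0)) \ F₂, deriv (h i) x}
        (G x)) :
    ∃ x : ℝ, F x + G x = 0 := by
  set D : ℝ → Fin n → ℝ := fun x i => deriv (h i) x
  have hFD (x : ℝ) : F x = trimmedPosSum f (D x) :=
    (hF x).unique (isLeast_trimmedPosSum f (D x))
  have hGD (x : ℝ) : G x = -trimmedPosSum f (-D x) := by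
    have hG' : IsGreatest (trimmedNegSums f (D x)) (G x) := hG x
    rw [trimmedNegSums_eq_neg] at hG'
    exact neg_eq_iff_eq_neg.1 (hG'.isLeast_neg.unique (isLeast_trimmedPosSum f (-D x)))
  have hdiff (i : Fin n) : Differentiable ℝ (h i) := (hsmooth i).differentiable one_ne_zero
  choose m hm using hne
  obtain ⟨a, ha⟩ := (Set.finite_range m).bddBelow
  obtain ⟨b, hb⟩ := (Set.finite_range m).bddAbove
  obtain ⟨x, hx⟩ := exists_trimmedPosSum_sub_eq_zero f
    (continuous_pi fun i => (hsmooth i).continuous_deriv le_rfl)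
    (fun i => (hconv i).deriv_nonpos_of_le_of_forall_le (hdiff i) (hm i) (ha ⟨i, rfl⟩))
    (fun i => (hconv i).deriv_nonneg_of_ge_of_forall_le (hdiff i) (hm i) (hb ⟨i, rfl⟩))
  exact ⟨x, by rw [hFD, hGD, ← sub_eq_add_neg, hx]⟩

/-- There exists a point where `H = F + G` vanishes, where `F` and `G` are the
trimmed positive and negative gradient sums. -/
theorem exists_zero_of_trimmed_gradient_sum
    (n f : ℕ) (hnf : 3 * f < n) (h : Fin n → ℝ → ℝ)
    (hconv : ∀ i, ConvexOn ℝ Set.univ (h i))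
    (hsmooth : ∀ i, ContDiff ℝ 1 (h i))
    (hne : ∀ i, {x : ℝ | ∀ y : ℝ, h i x ≤ h i y}.Nonempty)
    (hcpt : ∀ i, IsCompact {x : ℝ | ∀ y : ℝ, h i x ≤ h i y})
    (F G : ℝ → ℝ)
    (hF : ∀ x : ℝ,
      IsLeast {s : ℝ | ∃ F₁ : Finset (Fin n),
        F₁ ⊆ Finset.univ.filter (fun i => 0 < deriv (h i) x) ∧ F₁.card ≤ f ∧
        s = ∑ i ∈ (Finset.univ.filter (fun i => 0 < deriv (h i) x)) \ F₁, deriv (h i) x}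
        (F x))
    (hG : ∀ x : ℝ,
      IsGreatest {s : ℝ | ∃ F₂ : Finset (Fin n),
        F₂ ⊆ Finset.univ.filter (fun i => deriv (h i) x < 0) ∧ F₂.card ≤ f ∧
        s = ∑ i ∈ (Finset.univ.filter (fun i => deriv (h i) x < 0)) \ F₂, deriv (h i) x}
        (G x)) :
    ∃ x : ℝ, F x + G x = 0 :=
  exists_zero_of_trimmed_gradient_sum_general n f h hconv hsmooth hne F G hF hG
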